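/- arXiv:1109.1365 — 4 statements merged into one kernel-verified Lean document; each statement's English description precedes it below -/
import Mathlib

section
/- (Congruence of fast-slow bisimilarity for cooperation.) Let T be an action-labelled transition system on states C₁ and T' one on states C₂, and let L ⊆ A be a cooperation set with L ∩ A_f = ∅. If P₁ ≈ P₂ for states P₁, P₂ of T, then for every state Q of T': (P₁,Q) ≈ (P₂,Q) in the cooperation T ⋈_L T', and (Q,P₁) ≈ (Q,P₂) in T' ⋈_L T. -/
/-- An action-labelled transition system: transitions `P —(α,w)→ P'` where `w` is a
finite multiset of species records. -/
abbrev ALTS (C A W : Type*) := C → A → Multiset W → C → Prop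

section
variable {C C₁ C₂ A W : Type*}

/-- `P ↠ P'` : a transition labelled by a fast action. -/
def fastStep (T : ALTS C A W) (Af : Set A) (P P' : C) : Prop :=
  ∃ α w, α ∈ Af ∧ T P α w P'

/-- `P →(α,v) P'` : a transition labelled by a slow action `α`, with `v` the
restriction of the species record to the observed species `Δ`. -/
def slowStep (T : ALTS C A W) (Af : Set A) (Δ : Set W) [DecidablePred (· ∈ Δ)]
    (α : A) (v : Multiset W) (P P' : C) : Prop :=
  α ∉ Af ∧ ∃ w, T P α w P' ∧ v = w.filter (· ∈ Δ)

/-- `P ⇒ P'` : reflexive-transitive closure of fast steps. -/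
def weakFast (T : ALTS C A W) (Af : Set A) : C → C → Prop :=
  Relation.ReflTransGen (fastStep T Af)

/-- `P ⇒(α,v) P'` : fast steps, then a slow `(α,v)`-step, then fast steps. -/
def weakSlow (T : ALTS C A W) (Af : Set A) (Δ : Set W) [DecidablePred (· ∈ Δ)]
    (α : A) (v : Multiset W) (P P' : C) : Prop :=
  ∃ P₁ P₂, weakFast T Af P P₁ ∧ slowStep T Af Δ α v P₁ P₂ ∧ weakFast T Af P₂ P'

/-- A symmetric relation `R` is a fast-slow bisimulation. -/
def IsFSBisim (T : ALTS C A W) (Af : Set A) (Δ : Set W) [DecidablePred (· ∈ Δ)]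
    (R : C → C → Prop) : Prop :=
  Symmetric R ∧ ∀ P Q, R P Q →
    (∀ α v P', slowStep T Af Δ α v P P' → ∃ Q', weakSlow T Af Δ α v Q Q' ∧ R P' Q') ∧
    (∀ P', fastStep T Af P P' → ∃ Q', weakFast T Af Q Q' ∧ R P' Q')

/-- `P ≈ Q` : related by some fast-slow bisimulation. -/
def Bisim (T : ALTS C A W) (Af : Set A) (Δ : Set W) [DecidablePred (· ∈ Δ)]
    (P Q : C) : Prop :=
  ∃ R, IsFSBisim T Af Δ R ∧ R P Q

/-- The cooperation `T ⋈_L T'` of two action-labelled transition systems over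
cooperation set `L`. -/
def coop (T : ALTS C₁ A W) (T' : ALTS C₂ A W) (L : Set A) : ALTS (C₁ × C₂) A W :=
  fun PQ α w PQ' =>
    (α ∉ L ∧ T PQ.1 α w PQ'.1 ∧ PQ'.2 = PQ.2) ∨
    (α ∉ L ∧ T' PQ.2 α w PQ'.2 ∧ PQ'.1 = PQ.1) ∨
    (α ∈ L ∧ ∃ w₁ w₂, T PQ.1 α w₁ PQ'.1 ∧ T' PQ.2 α w₂ PQ'.2 ∧ w = w₁ + w₂)

end

section helpers
variable {C C₁ C₂ A W : Type*} {T : ALTS C₁ A W} {T' : ALTS C₂ A W}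
  {Af : Set A} {Δ : Set W} [DecidablePred (· ∈ Δ)] {L : Set A}

lemma bisim_isFSBisim {D : Type*} {S : ALTS D A W} :
    IsFSBisim S Af Δ (Bisim S Af Δ) := by
  constructor
  · rintro P Q ⟨R, hR, hPQ⟩; exact ⟨R, hR, hR.1 hPQ⟩
  · rintro P Q ⟨R, hR, hPQ⟩
    obtain ⟨hs, hf⟩ := hR.2 P Q hPQ
    refine ⟨fun α v P' hst => ?_, fun P' hst => ?_⟩
    · obtain ⟨Q', hw, hr⟩ := hs α v P' hst
      exact ⟨Q', hw, R, hR, hr⟩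
    · obtain ⟨Q', hw, hr⟩ := hf P' hst
      exact ⟨Q', hw, R, hR, hr⟩

lemma notL (hL : L ∩ Af = ∅) {α : A} (hα : α ∈ Af) : α ∉ L :=
  fun hαL => Set.eq_empty_iff_forall_notMem.mp hL α ⟨hαL, hα⟩

lemma weakFast_lift_left (hL : L ∩ Af = ∅) {P P' : C₁} (Q : C₂)
    (h : weakFast T Af P P') : weakFast (coop T T' L) Af (P, Q) (P', Q) := by
  induction h with
  | refl => exact Relation.ReflTransGen.refl
  | tail _ hstep ih =>
      obtain ⟨α, w, hαf, hT⟩ := hstep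
      exact ih.tail ⟨α, w, hαf, Or.inl ⟨notL hL hαf, hT, rfl⟩⟩

lemma weakFast_lift_right (hL : L ∩ Af = ∅) {Q Q' : C₂} (P : C₁)
    (h : weakFast T' Af Q Q') : weakFast (coop T T' L) Af (P, Q) (P, Q') := by
  induction h with
  | refl => exact Relation.ReflTransGen.refl
  | tail _ hstep ih =>
      obtain ⟨α, w, hαf, hT⟩ := hstep
      exact ih.tail ⟨α, w, hαf, Or.inr (Or.inl ⟨notL hL hαf, hT, rfl⟩)⟩

lemma coop_left (hL : L ∩ Af = ∅) {P₁ P₂ : C₁} (h : Bisim T Af Δ P₁ P₂) (Q : C₂) :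
    Bisim (coop T T' L) Af Δ (P₁, Q) (P₂, Q) := by
  refine ⟨fun x y => Bisim T Af Δ x.1 y.1 ∧ x.2 = y.2, ⟨?_, ?_⟩, h, rfl⟩
  · rintro x y ⟨hb, he⟩; exact ⟨bisim_isFSBisim.1 hb, he.symm⟩
  · rintro ⟨P, Qc⟩ ⟨P', Q'⟩ ⟨hb, (he : Qc = Q')⟩
    subst he
    constructor
    · rintro α v ⟨Pa, Qa⟩ ⟨hαf, w, hT, hv⟩
      rcases hT with ⟨hαL, hT1, (h2 : Qa = Qc)⟩ | ⟨hαL, hT2, (h2 : Pa = P)⟩ |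
        ⟨hαL, w₁, w₂, hT1, hT2, hw⟩
      · subst h2
        obtain ⟨P₂', hws, hr⟩ := (bisim_isFSBisim.2 _ _ hb).1 α v Pa ⟨hαf, w, hT1, hv⟩
        obtain ⟨X, Y, h1, ⟨hαf', w', hT', hv'⟩, h3⟩ := hws
        exact ⟨(P₂', Qa), ⟨(X, Qa), (Y, Qa), weakFast_lift_left hL Qa h1,
          ⟨hαf', w', Or.inl ⟨hαL, hT', rfl⟩, hv'⟩, weakFast_lift_left hL Qa h3⟩, hr, rfl⟩
      · subst h2
        exact ⟨(P', Qa), ⟨(P', Qc), (P', Qa), Relation.ReflTransGen.refl,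
          ⟨hαf, w, Or.inr (Or.inl ⟨hαL, hT2, rfl⟩), hv⟩, Relation.ReflTransGen.refl⟩, hb, rfl⟩
      · obtain ⟨P₂', hws, hr⟩ :=
          (bisim_isFSBisim.2 _ _ hb).1 α (w₁.filter (· ∈ Δ)) Pa ⟨hαf, w₁, hT1, rfl⟩
        obtain ⟨X, Y, h1, ⟨hαf', w₁', hT1', hv'⟩, h3⟩ := hws
        refine ⟨(P₂', Qa), ⟨(X, Qc), (Y, Qa), weakFast_lift_left hL Qc h1,
          ⟨hαf', w₁' + w₂, Or.inr (Or.inr ⟨hαL, w₁', w₂, hT1', hT2, rfl⟩), ?_⟩,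
          weakFast_lift_left hL Qa h3⟩, hr, rfl⟩
        rw [hv, hw, Multiset.filter_add, Multiset.filter_add, ← hv']
    · rintro ⟨Pa, Qa⟩ ⟨α, w, hαf, hT⟩
      rcases hT with ⟨hαL, hT1, (h2 : Qa = Qc)⟩ | ⟨hαL, hT2, (h2 : Pa = P)⟩ | ⟨hαL, -⟩
      · subst h2
        obtain ⟨P₂', hwf, hr⟩ := (bisim_isFSBisim.2 _ _ hb).2 Pa ⟨α, w, hαf, hT1⟩
        exact ⟨(P₂', Qa), weakFast_lift_left hL Qa hwf, hr, rfl⟩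
      · subst h2
        exact ⟨(P', Qa), Relation.ReflTransGen.single
          ⟨α, w, hαf, Or.inr (Or.inl ⟨hαL, hT2, rfl⟩)⟩, hb, rfl⟩
      · exact absurd hαL (notL hL hαf)

lemma coop_right (hL : L ∩ Af = ∅) {Q₁ Q₂ : C₂} (h : Bisim T' Af Δ Q₁ Q₂) (P : C₁) :
    Bisim (coop T T' L) Af Δ (P, Q₁) (P, Q₂) := by
  refine ⟨fun x y => x.1 = y.1 ∧ Bisim T' Af Δ x.2 y.2, ⟨?_, ?_⟩, rfl, h⟩
  · rintro x y ⟨he, hb⟩; exact ⟨he.symm, bisim_isFSBisim.1 hb⟩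
  · rintro ⟨Pc, Q⟩ ⟨P', Q'⟩ ⟨(he : Pc = P'), hb⟩
    subst he
    constructor
    · rintro α v ⟨Pa, Qa⟩ ⟨hαf, w, hT, hv⟩
      rcases hT with ⟨hαL, hT1, (h2 : Qa = Q)⟩ | ⟨hαL, hT2, (h2 : Pa = Pc)⟩ |
        ⟨hαL, w₁, w₂, hT1, hT2, hw⟩
      · subst h2
        exact ⟨(Pa, Q'), ⟨(Pc, Q'), (Pa, Q'), Relation.ReflTransGen.refl,
          ⟨hαf, w, Or.inl ⟨hαL, hT1, rfl⟩, hv⟩, Relation.ReflTransGen.refl⟩, rfl, hb⟩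
      · subst h2
        obtain ⟨Q₂', hws, hr⟩ := (bisim_isFSBisim.2 _ _ hb).1 α v Qa ⟨hαf, w, hT2, hv⟩
        obtain ⟨X, Y, h1, ⟨hαf', w', hT', hv'⟩, h3⟩ := hws
        exact ⟨(Pa, Q₂'), ⟨(Pa, X), (Pa, Y), weakFast_lift_right hL Pa h1,
          ⟨hαf', w', Or.inr (Or.inl ⟨hαL, hT', rfl⟩), hv'⟩,
          weakFast_lift_right hL Pa h3⟩, rfl, hr⟩
      · obtain ⟨Q₂', hws, hr⟩ :=
          (bisim_isFSBisim.2 _ _ hb).1 α (w₂.filter (· ∈ Δ)) Qa ⟨hαf, w₂, hT2, rfl⟩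
        obtain ⟨X, Y, h1, ⟨hαf', w₂', hT2', hv'⟩, h3⟩ := hws
        refine ⟨(Pa, Q₂'), ⟨(Pc, X), (Pa, Y), weakFast_lift_right hL Pc h1,
          ⟨hαf', w₁ + w₂', Or.inr (Or.inr ⟨hαL, w₁, w₂', hT1, hT2', rfl⟩), ?_⟩,
          weakFast_lift_right hL Pa h3⟩, rfl, hr⟩
        rw [hv, hw, Multiset.filter_add, Multiset.filter_add, ← hv']
    · rintro ⟨Pa, Qa⟩ ⟨α, w, hαf, hT⟩
      rcases hT with ⟨hαL, hT1, (h2 : Qa = Q)⟩ | ⟨hαL, hT2, (h2 : Pa = Pc)⟩ | ⟨hαL, -⟩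
      · subst h2
        exact ⟨(Pa, Q'), Relation.ReflTransGen.single
          ⟨α, w, hαf, Or.inl ⟨hαL, hT1, rfl⟩⟩, rfl, hb⟩
      · subst h2
        obtain ⟨Q₂', hwf, hr⟩ := (bisim_isFSBisim.2 _ _ hb).2 Qa ⟨α, w, hαf, hT2⟩
        exact ⟨(Pa, Q₂'), weakFast_lift_right hL Pa hwf, rfl, hr⟩
      · exact absurd hαL (notL hL hαf)

end helpers

/-- (Congruence of fast-slow bisimilarity for cooperation.) If `L ∩ A_f = ∅` and
`P₁ ≈ P₂` in `T`, then for every state `Q` of `T'`, `(P₁,Q) ≈ (P₂,Q)` in `T ⋈_L T'`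
and `(Q,P₁) ≈ (Q,P₂)` in `T' ⋈_L T`. -/
theorem coop_congruence {C₁ C₂ A W : Type*}
    (T : ALTS C₁ A W) (T' : ALTS C₂ A W)
    (Af : Set A) (Δ : Set W) [DecidablePred (· ∈ Δ)]
    (L : Set A) (hL : L ∩ Af = ∅)
    (P₁ P₂ : C₁) (h : Bisim T Af Δ P₁ P₂) :
    ∀ Q : C₂,
      Bisim (coop T T' L) Af Δ (P₁, Q) (P₂, Q) ∧
      Bisim (coop T' T L) Af Δ (Q, P₁) (Q, P₂) := by
  intro Q
  exact ⟨coop_left hL h Q, coop_right hL h Q⟩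
end

section
/- The condition L ∩ A_f = ∅ in the cooperation congruence theorem cannot be dropped: with A = {α, β, γ}, A_f = {α, β}, A_s = {γ}, Δ = ∅, and L = {α}, let T be the system on states {1,2} × {0,1,2} with transitions (1,0) —α→ (1,2), (1,2) —γ→ (1,0), (2,0) —β→ (2,2), (2,2) —γ→ (2,0) (all with empty multiset w), and let T' be the system on states {0,1} with the single transition 1 —α→ 0 (empty w). Then (1,0) ≈ (2,0) in T, but ((1,0), 1) is not fast-slow bisimilar to ((2,0), 1) in the cooperation T ⋈_L T'. -/
/-- Actions: `α = 0`, `β = 1`, `γ = 2`. The fast actions are `α` and `β`. -/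
def Af4 : Set (Fin 3) := {0, 1}

/-- No observed species. -/
def Δ4 : Set Unit := ∅

instance : DecidablePred (· ∈ Δ4) := fun _ => Decidable.isFalse (fun h => h)

/-- The system `T` on states `{1,2} × {0,1,2}` with transitions
`(1,0) —α→ (1,2)`, `(1,2) —γ→ (1,0)`, `(2,0) —β→ (2,2)`, `(2,2) —γ→ (2,0)`,
all with empty multiset. -/
def T4 : ALTS (ℕ × ℕ) (Fin 3) Unit := fun s a w s' =>
  w = 0 ∧
    ((s = (1, 0) ∧ a = 0 ∧ s' = (1, 2)) ∨
     (s = (1, 2) ∧ a = 2 ∧ s' = (1, 0)) ∨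
     (s = (2, 0) ∧ a = 1 ∧ s' = (2, 2)) ∨
     (s = (2, 2) ∧ a = 2 ∧ s' = (2, 0)))

/-- The system `T'` on states `{0,1}` with the single transition `1 —α→ 0`. -/
def T4' : ALTS ℕ (Fin 3) Unit := fun s a w s' =>
  w = 0 ∧ s = 1 ∧ a = 0 ∧ s' = 0

-- AUX START
section Aux

abbrev CT := coop T4 T4' ({0} : Set (Fin 3))

lemma af0 : (0 : Fin 3) ∈ Af4 := by simp [Af4]
lemma af1 : (1 : Fin 3) ∈ Af4 := by simp [Af4]
lemma af2 : (2 : Fin 3) ∉ Af4 := by simp [Af4]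

-- Part 1 relation
def R1 : (ℕ × ℕ) → (ℕ × ℕ) → Prop := fun x y =>
  (x = (1,0) ∧ y = (2,0)) ∨ (x = (2,0) ∧ y = (1,0)) ∨
  (x = (1,2) ∧ y = (2,2)) ∨ (x = (2,2) ∧ y = (1,2))

lemma part1 : Bisim T4 Af4 Δ4 (1, 0) (2, 0) := by
  refine ⟨R1, ⟨?_, ?_⟩, Or.inl ⟨rfl, rfl⟩⟩
  · intro x y h; rcases h with ⟨hx,hy⟩|⟨hx,hy⟩|⟨hx,hy⟩|⟨hx,hy⟩ <;> subst hx <;> subst hy <;>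
      simp [R1]
  · rintro P Q hPQ
    constructor
    · rintro α v P' ⟨hα, w, hT, hv⟩
      rcases hT with ⟨hw, hc⟩
      subst hw
      rcases hc with ⟨hP, ha, hP'⟩|⟨hP, ha, hP'⟩|⟨hP, ha, hP'⟩|⟨hP, ha, hP'⟩ <;>
        subst hP <;> subst ha <;> subst hP' <;>
        first
        | exact absurd af0 hα
        | exact absurd af1 hα
        | skip
      all_goals
        rcases hPQ with ⟨hx,hy⟩|⟨hx,hy⟩|⟨hx,hy⟩|⟨hx,hy⟩ <;> try exact absurd hx (by decide)
      · -- P = (1,2), Q = (2,2)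
        subst hy
        exact ⟨(2,0), ⟨(2,2), (2,0), Relation.ReflTransGen.refl,
          ⟨af2, 0, ⟨rfl, by tauto⟩, hv⟩, Relation.ReflTransGen.refl⟩, by simp [R1]⟩
      · subst hy
        exact ⟨(1,0), ⟨(1,2), (1,0), Relation.ReflTransGen.refl,
          ⟨af2, 0, ⟨rfl, by tauto⟩, hv⟩, Relation.ReflTransGen.refl⟩, by simp [R1]⟩
    · rintro P' ⟨α, w, hα, ⟨hw, hc⟩⟩
      subst hw
      rcases hc with ⟨hP, ha, hP'⟩|⟨hP, ha, hP'⟩|⟨hP, ha, hP'⟩|⟨hP, ha, hP'⟩ <;>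
        subst hP <;> subst ha <;> subst hP' <;>
        first
        | exact absurd hα af2
        | skip
      all_goals
        rcases hPQ with ⟨hx,hy⟩|⟨hx,hy⟩|⟨hx,hy⟩|⟨hx,hy⟩ <;> try exact absurd hx (by decide)
      · subst hy
        exact ⟨(2,2), Relation.ReflTransGen.single ⟨1, 0, af1, rfl, by tauto⟩, by simp [R1]⟩
      · subst hy
        exact ⟨(1,2), Relation.ReflTransGen.single ⟨0, 0, af0, rfl, by tauto⟩, by simp [R1]⟩

-- Part 2 lemmas
def S2 : Set ((ℕ × ℕ) × ℕ) := {((2,0),1), ((2,2),1)}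

lemma step20 : ∀ α (w : Multiset Unit) s', CT ((2,0),1) α w s' → α = 1 ∧ s' = ((2,2),1) := by
  rintro α w s' (⟨hL, ⟨hw, hc⟩, h2⟩ | ⟨hL, ⟨hw, h1, ha, h0⟩, h2⟩ | ⟨hL, w₁, w₂, ⟨hw, hc⟩, ht', hw'⟩)
  · rcases hc with ⟨hP,ha,hP'⟩|⟨hP,ha,hP'⟩|⟨hP,ha,hP'⟩|⟨hP,ha,hP'⟩ <;>
      simp_all <;> exact Prod.ext hP' h2
  · exact absurd (ha ▸ rfl) hL
  · rcases hc with ⟨hP,ha,hP'⟩|⟨hP,ha,hP'⟩|⟨hP,ha,hP'⟩|⟨hP,ha,hP'⟩ <;> simp_all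

lemma step22 : ∀ α (w : Multiset Unit) s', CT ((2,2),1) α w s' → α = 2 ∧ s' = ((2,0),1) := by
  rintro α w s' (⟨hL, ⟨hw, hc⟩, h2⟩ | ⟨hL, ⟨hw, h1, ha, h0⟩, h2⟩ | ⟨hL, w₁, w₂, ⟨hw, hc⟩, ht', hw'⟩)
  · rcases hc with ⟨hP,ha,hP'⟩|⟨hP,ha,hP'⟩|⟨hP,ha,hP'⟩|⟨hP,ha,hP'⟩ <;>
      simp_all <;> exact Prod.ext hP' h2
  · exact absurd (ha ▸ rfl) hL
  · rcases hc with ⟨hP,ha,hP'⟩|⟨hP,ha,hP'⟩|⟨hP,ha,hP'⟩|⟨hP,ha,hP'⟩ <;> simp_all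

lemma step100 : ∀ α (w : Multiset Unit) s', ¬ CT ((1,0),0) α w s' := by
  rintro α w s' (⟨hL, ⟨hw, hc⟩, h2⟩ | ⟨hL, ⟨hw, h1, ha, h0⟩, h2⟩ | ⟨hL, w₁, w₂, ht, ⟨hw', h1, ha, h0⟩, hw⟩)
  · rcases hc with ⟨hP,ha,hP'⟩|⟨hP,ha,hP'⟩|⟨hP,ha,hP'⟩|⟨hP,ha,hP'⟩ <;> simp_all
  · simp_all
  · simp_all

lemma fast_S : ∀ s ∈ S2, ∀ s', fastStep CT Af4 s s' → s' ∈ S2 := by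
  rintro s hs s' ⟨α, w, hα, ht⟩
  rcases hs with hs | hs <;> subst hs
  · exact (step20 α w s' ht).2 ▸ Or.inr rfl
  · exact absurd ((step22 α w s' ht).1 ▸ hα) af2

lemma wf_S : ∀ s ∈ S2, ∀ s', weakFast CT Af4 s s' → s' ∈ S2 := by
  intro s hs s' h
  induction h with
  | refl => exact hs
  | tail _ hstep ih => exact fast_S _ ih _ hstep

lemma slow_S : ∀ s ∈ S2, ∀ α v s', slowStep CT Af4 Δ4 α v s s' → s' ∈ S2 := by
  rintro s hs α v s' ⟨hα, w, ht, hv⟩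
  rcases hs with hs | hs <;> subst hs
  · exact absurd ((step20 α w s' ht).1 ▸ af1) hα
  · exact (step22 α w s' ht).2 ▸ Or.inl rfl

lemma wf100 : ∀ s', weakFast CT Af4 ((1,0),0) s' → s' = ((1,0),0) := by
  intro s' h
  induction h with
  | refl => rfl
  | tail _ hstep ih =>
    obtain ⟨α, w, _, ht⟩ := hstep
    exact absurd (ih ▸ ht) (step100 α w _)

lemma no_weakSlow100 : ∀ α v s', ¬ weakSlow CT Af4 Δ4 α v ((1,0),0) s' := by
  rintro α v s' ⟨P₁, P₂, h1, ⟨hα, w, ht, hv⟩, h3⟩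
  exact step100 α w P₂ (wf100 P₁ h1 ▸ ht)

lemma slow22 : slowStep CT Af4 Δ4 2 0 ((2,2),1) ((2,0),1) := by
  refine ⟨af2, 0, Or.inl ⟨by decide, ⟨rfl, by tauto⟩, rfl⟩, by simp⟩

lemma not_R_S : ∀ (R : ((ℕ×ℕ)×ℕ) → ((ℕ×ℕ)×ℕ) → Prop), IsFSBisim CT Af4 Δ4 R →
    ∀ s ∈ S2, ¬ R s ((1,0),0) := by
  rintro R ⟨hsym, hcond⟩ s hs hR
  rcases hs with hs | hs <;> subst hs
  · -- ((2,0),1) : fast step β to ((2,2),1)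
    obtain ⟨Q', hwf, hR'⟩ := (hcond _ _ hR).2 ((2,2),1)
      ⟨1, 0, af1, Or.inl ⟨by decide, ⟨rfl, by tauto⟩, rfl⟩⟩
    have hQ' := wf100 Q' hwf
    subst hQ'
    obtain ⟨Q'', hws, _⟩ := (hcond _ _ hR').1 2 0 ((2,0),1) slow22
    exact no_weakSlow100 _ _ _ hws
  · obtain ⟨Q'', hws, _⟩ := (hcond _ _ hR).1 2 0 ((2,0),1) slow22
    exact no_weakSlow100 _ _ _ hws

end Aux

/-- The condition `L ∩ A_f = ∅` in the cooperation congruence theorem cannot be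
dropped: with `L = {α}` (a fast action), `(1,0) ≈ (2,0)` in `T`, but
`((1,0),1)` is not fast-slow bisimilar to `((2,0),1)` in `T ⋈_L T'`. -/
theorem coop_congruence_condition_necessary :
    Bisim T4 Af4 Δ4 (1, 0) (2, 0) ∧
    ¬ Bisim (coop T4 T4' ({0} : Set (Fin 3))) Af4 Δ4 ((1, 0), 1) ((2, 0), 1) := by
  refine ⟨part1, ?_⟩
  rintro ⟨R, hbis, hR0⟩
  obtain ⟨hsym, hcond⟩ := hbis
  -- ((1,0),1) does a fast sync α step to ((1,2),0)
  obtain ⟨Q', hwf, hR1⟩ := (hcond _ _ hR0).2 ((1,2),0)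
    ⟨0, 0, af0, Or.inr (Or.inr ⟨rfl, 0, 0, ⟨rfl, by tauto⟩, ⟨rfl, rfl, rfl, rfl⟩, rfl⟩)⟩
  have hQ'S : Q' ∈ S2 := wf_S _ (Or.inl rfl) _ hwf
  -- ((1,2),0) does a slow γ step to ((1,0),0)
  obtain ⟨Q'', hws, hR2⟩ := (hcond _ _ hR1).1 2 0 ((1,0),0)
    ⟨af2, 0, Or.inl ⟨by decide, ⟨rfl, by tauto⟩, rfl⟩, by simp⟩
  obtain ⟨P₁, P₂, h1, h2, h3⟩ := hws
  have hQ''S : Q'' ∈ S2 := wf_S _ (slow_S _ (wf_S _ hQ'S _ h1) _ _ _ h2) _ h3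
  exact not_R_S R ⟨hsym, hcond⟩ Q'' hQ''S (hsym hR2)
end

section
/- (Slow bisimulation suffices.) Let P be a fast-slow transition system on states Σ × Φ whose fast transitions do not change the Σ-component (if (s,f) ↠ (s',f') in P then s' = s), and let Q be a fast-slow transition system on states Σ with no fast transitions, both over the same set Λ of slow labels. On the disjoint union of the state spaces, let R be the symmetric closure of {((s,f), s) : s ∈ Σ, f ∈ Φ}. If R is a slow bisimulation, then R is a fast-slow bisimulation. -/
/-- A fast-slow transition system: a fast transition relation and, for each
slow label, a slow transition relation. -/
structure FSTS (C : Type*) (Λ : Type*) where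
  fast : C → C → Prop
  slow : Λ → C → C → Prop

namespace FSTS

variable {C Λ : Type*}

/-- `⇒` : reflexive-transitive closure of the fast relation. -/
def weakFast (T : FSTS C Λ) : C → C → Prop :=
  Relation.ReflTransGen T.fast

/-- `P ⇒ℓ P'` : fast transitions, then a slow `ℓ`-transition, then fast transitions. -/
def weakSlow (T : FSTS C Λ) (ℓ : Λ) (P P' : C) : Prop :=
  ∃ P₁ P₂, T.weakFast P P₁ ∧ T.slow ℓ P₁ P₂ ∧ T.weakFast P₂ P'

/-- A symmetric relation `R` is a fast-slow bisimulation. -/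
def IsBisim (T : FSTS C Λ) (R : C → C → Prop) : Prop :=
  Symmetric R ∧ ∀ P Q, R P Q →
    (∀ ℓ P', T.slow ℓ P P' → ∃ Q', T.weakSlow ℓ Q Q' ∧ R P' Q') ∧
    (∀ P', T.fast P P' → ∃ Q', T.weakFast Q Q' ∧ R P' Q')

/-- `P ≈ Q` : related by some fast-slow bisimulation. -/
def Bisimilar (T : FSTS C Λ) (P Q : C) : Prop :=
  ∃ R, T.IsBisim R ∧ R P Q

end FSTS


namespace FSTS

/-- Disjoint union of two fast-slow transition systems. -/
def sum {C₁ C₂ Λ : Type*} (T₁ : FSTS C₁ Λ) (T₂ : FSTS C₂ Λ) : FSTS (C₁ ⊕ C₂) Λ where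
  fast x y :=
    (∃ a b, x = Sum.inl a ∧ y = Sum.inl b ∧ T₁.fast a b) ∨
    (∃ a b, x = Sum.inr a ∧ y = Sum.inr b ∧ T₂.fast a b)
  slow ℓ x y :=
    (∃ a b, x = Sum.inl a ∧ y = Sum.inl b ∧ T₁.slow ℓ a b) ∨
    (∃ a b, x = Sum.inr a ∧ y = Sum.inr b ∧ T₂.slow ℓ a b)

/-- A symmetric relation `R` is a slow bisimulation: only slow transitions are matched. -/
def IsSlowBisim {C Λ : Type*} (T : FSTS C Λ) (R : C → C → Prop) : Prop :=
  Symmetric R ∧ ∀ P Q, R P Q →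
    ∀ ℓ P', T.slow ℓ P P' → ∃ Q', T.weakSlow ℓ Q Q' ∧ R P' Q'

end FSTS

/-- (Slow bisimulation suffices.) If the fast transitions of `P` do not change the
`Σ`-component, `Q` has no fast transitions, and the symmetric closure `R` of
`{((s,f), s)}` is a slow bisimulation on the disjoint union, then `R` is a
fast-slow bisimulation. -/
theorem slow_bisim_suffices {Sig Φ Λ : Type*}
    (P : FSTS (Sig × Φ) Λ) (Q : FSTS Sig Λ)
    (hPfast : ∀ (s s' : Sig) (f f' : Φ), P.fast (s, f) (s', f') → s' = s)
    (hQfast : ∀ s s' : Sig, ¬ Q.fast s s')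
    (R : (Sig × Φ) ⊕ Sig → (Sig × Φ) ⊕ Sig → Prop)
    (hR : ∀ x y, R x y ↔
      ((∃ s f, x = Sum.inl (s, f) ∧ y = Sum.inr s) ∨
       (∃ s f, y = Sum.inl (s, f) ∧ x = Sum.inr s)))
    (hslow : (P.sum Q).IsSlowBisim R) :
    (P.sum Q).IsBisim R := by
  obtain ⟨hsym, hmatch⟩ := hslow
  refine ⟨hsym, fun x y hxy => ⟨fun ℓ x' hx => hmatch x y hxy ℓ x' hx, ?_⟩⟩
  intro x' hx
  rcases hx with ⟨⟨s, f⟩, ⟨s', f'⟩, rfl, rfl, hf⟩ | ⟨a, b, rfl, rfl, hf⟩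
  · have hs : s' = s := hPfast s s' f f' hf
    rcases (hR _ y).mp hxy with ⟨s₀, f₀, h1, h2⟩ | ⟨s₀, f₀, h1, h2⟩
    · obtain ⟨rfl, rfl⟩ : s₀ = s ∧ f₀ = f := by
        injection h1 with h; exact ⟨congrArg Prod.fst h.symm, congrArg Prod.snd h.symm⟩
      subst h2
      exact ⟨Sum.inr s₀, Relation.ReflTransGen.refl,
        (hR _ _).mpr (Or.inl ⟨s', f', rfl, by rw [hs]⟩)⟩
    · cases h2
  · exact absurd hf (hQfast a b)
end

section
/- (The competitive-inhibition model is fast-slow bisimilar to its Michaelis–Menten-style reduction.) For all n, m, p ∈ ℕ, the symmetric closure of the relation R = {((n−k−j, m−j−l, p−l, k, l, j), (n−k, m, p, k)) : 0 ≤ k ≤ n, 0 ≤ j ≤ min(m, n−k), 0 ≤ l ≤ p, j + l ≤ m} on the disjoint union of the state spaces of Sys and Sys' is a fast-slow bisimulation; in particular the initial state (n, m, p, 0, 0, 0) of Sys is fast-slow bisimilar to the initial state (n, m, p, 0) of Sys'. -/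
/-! Competitive-inhibition network: six species ordered `(S, E, I, P, EI, SE)`
(indices `0,…,5`) and five reactions with stoichiometry vectors in `ℤ⁶`.
The reactions `α₁, α₋₁, β₁, β₋₁` are fast and `γ` is slow. -/

def vα₁ : Fin 6 → ℤ := ![0, -1, -1, 0, 1, 0]
def vαm₁ : Fin 6 → ℤ := ![0, 1, 1, 0, -1, 0]
def vβ₁ : Fin 6 → ℤ := ![-1, -1, 0, 0, 0, 1]
def vβm₁ : Fin 6 → ℤ := ![1, 1, 0, 0, 0, -1]
def vγ : Fin 6 → ℤ := ![0, 1, 0, 1, 0, -1]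

/-- The combined state space: states of `Sys` (in `ℕ⁶`) and of the reduced system
`Sys'` (in `ℕ⁴`, ordered `(S', E', I', P')`). -/
abbrev CIState := (Fin 6 → ℕ) ⊕ (Fin 4 → ℕ)

/-- Fast transitions: in `Sys`, a step by one of the four fast stoichiometry
vectors (with nonnegative result); `Sys'` has no fast transitions. -/
def ciFast : CIState → CIState → Prop
  | .inl x, .inl y => ∃ v ∈ [vα₁, vαm₁, vβ₁, vβm₁], ∀ i, (y i : ℤ) = (x i : ℤ) + v i
  | _, _ => False

/-- Slow transitions, labelled by `(γ, q)` where `q` is the `P`-level of the source: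
in `Sys`, a step by `v(γ)` (with nonnegative result); in `Sys'`, the single reaction
`(s, e, i, q) → (s−1, e, i, q+1)` enabled when `s ≥ 1` and `e ≥ 1`. -/
def ciSlow (q : ℕ) : CIState → CIState → Prop
  | .inl x, .inl y => q = x 3 ∧ ∀ i, (y i : ℤ) = (x i : ℤ) + vγ i
  | .inr s, .inr t => q = s 3 ∧ 1 ≤ s 0 ∧ 1 ≤ s 1 ∧ t = ![s 0 - 1, s 1, s 2, s 3 + 1]
  | _, _ => False

/-- `⇒` : a finite sequence of fast transitions. -/
def ciWeakFast : CIState → CIState → Prop :=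
  Relation.ReflTransGen ciFast

/-- `x ⇒(γ,q) y` : fast transitions, then a slow `(γ,q)`-transition, then fast
transitions. -/
def ciWeakSlow (q : ℕ) (x y : CIState) : Prop :=
  ∃ x₁ x₂, ciWeakFast x x₁ ∧ ciSlow q x₁ x₂ ∧ ciWeakFast x₂ y

/-- A symmetric relation `R` is a fast-slow bisimulation for the combined system. -/
def ciIsFSBisim (R : CIState → CIState → Prop) : Prop :=
  Symmetric R ∧ ∀ x y, R x y →
    (∀ q x', ciSlow q x x' → ∃ y', ciWeakSlow q y y' ∧ R x' y') ∧
    (∀ x', ciFast x x' → ∃ y', ciWeakFast y y' ∧ R x' y')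

/-- Fast-slow bisimilarity for the combined system. -/
def ciBisimilar (x y : CIState) : Prop :=
  ∃ R, ciIsFSBisim R ∧ R x y

/-- The relation
`{((n−k−j, m−j−l, p−l, k, l, j), (n−k, m, p, k)) : k ≤ n, j ≤ min (m) (n−k), l ≤ p, j+l ≤ m}`. -/
def ciRbase (n m p : ℕ) (x y : CIState) : Prop :=
  ∃ k j l, k ≤ n ∧ j ≤ min m (n - k) ∧ l ≤ p ∧ j + l ≤ m ∧
    x = Sum.inl ![n - k - j, m - j - l, p - l, k, l, j] ∧
    y = Sum.inr ![n - k, m, p, k]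

/-- The symmetric closure of `ciRbase`. -/
def ciR (n m p : ℕ) (x y : CIState) : Prop :=
  ciRbase n m p x y ∨ ciRbase n m p y x

private lemma cv5 {α : Type*} (a b c d e f : α) : (![a,b,c,d,e,f]) 5 = f := rfl

set_option maxHeartbeats 1600000 in
/-- (The competitive-inhibition model is fast-slow bisimilar to its
Michaelis–Menten-style reduction.) For all `n, m, p`, the symmetric closure `ciR` is a
fast-slow bisimulation; in particular the initial state `(n, m, p, 0, 0, 0)` of `Sys`
is fast-slow bisimilar to the initial state `(n, m, p, 0)` of `Sys'`. -/
theorem competitive_inhibition_reduction (n m p : ℕ) :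
    ciIsFSBisim (ciR n m p) ∧
    ciBisimilar (Sum.inl ![n, m, p, 0, 0, 0]) (Sum.inr ![n, m, p, 0]) := by
  have hsym : Symmetric (ciR n m p) := fun x y h => h.elim Or.inr Or.inl
  -- direction 1: x is a Sys state related to a Sys' state y
  have hmain1 : ∀ x y, ciRbase n m p x y →
      (∀ q x', ciSlow q x x' → ∃ y', ciWeakSlow q y y' ∧ ciR n m p x' y') ∧
      (∀ x', ciFast x x' → ∃ y', ciWeakFast y y' ∧ ciR n m p x' y') := by
    rintro x y ⟨k, j, l, hk, hj, hl, hjl, rfl, rfl⟩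
    constructor
    · rintro q x' hs
      rcases x' with z | t
      · obtain ⟨hq, hz⟩ := hs
        simp at hq
        have e0 := hz 0; have e1 := hz 1; have e2 := hz 2
        have e3 := hz 3; have e4 := hz 4; have e5 := hz 5
        simp [vγ, cv5] at e0 e1 e2 e3 e4 e5
        have hj1 : 1 ≤ j := by omega
        refine ⟨Sum.inr ![n - (k+1), m, p, k+1],
          ⟨_, _, Relation.ReflTransGen.refl, ?_, Relation.ReflTransGen.refl⟩,
          Or.inl ⟨k+1, j-1, l, by omega, by omega, hl, by omega, ?_, rfl⟩⟩
        · refine ⟨by simpa using hq, by simp; omega, by simp; omega, ?_⟩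
          funext i; fin_cases i <;> simp <;> omega
        · congr 1
          funext i; fin_cases i <;> simp [cv5] <;> omega
      · exact hs.elim
    · rintro x' hf
      rcases x' with z | t
      · obtain ⟨v, hv, hz⟩ := hf
        have e0 := hz 0; have e1 := hz 1; have e2 := hz 2
        have e3 := hz 3; have e4 := hz 4; have e5 := hz 5
        simp at hv
        rcases hv with rfl | rfl | rfl | rfl
        · simp [vα₁, cv5] at e0 e1 e2 e3 e4 e5
          refine ⟨_, Relation.ReflTransGen.refl,
            Or.inl ⟨k, j, l+1, hk, hj, by omega, by omega, ?_, rfl⟩⟩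
          congr 1; funext i; fin_cases i <;> simp [cv5] <;> omega
        · simp [vαm₁, cv5] at e0 e1 e2 e3 e4 e5
          refine ⟨_, Relation.ReflTransGen.refl,
            Or.inl ⟨k, j, l-1, hk, hj, by omega, by omega, ?_, rfl⟩⟩
          congr 1; funext i; fin_cases i <;> simp [cv5] <;> omega
        · simp [vβ₁, cv5] at e0 e1 e2 e3 e4 e5
          refine ⟨_, Relation.ReflTransGen.refl,
            Or.inl ⟨k, j+1, l, hk, by omega, hl, by omega, ?_, rfl⟩⟩
          congr 1; funext i; fin_cases i <;> simp [cv5] <;> omega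
        · simp [vβm₁, cv5] at e0 e1 e2 e3 e4 e5
          refine ⟨_, Relation.ReflTransGen.refl,
            Or.inl ⟨k, j-1, l, hk, by omega, hl, by omega, ?_, rfl⟩⟩
          congr 1; funext i; fin_cases i <;> simp [cv5] <;> omega
      · exact hf.elim
  -- direction 2: x is a Sys' state related to a Sys state y
  have hmain2 : ∀ x y, ciRbase n m p y x →
      (∀ q x', ciSlow q x x' → ∃ y', ciWeakSlow q y y' ∧ ciR n m p x' y') ∧
      (∀ x', ciFast x x' → ∃ y', ciWeakFast y y' ∧ ciR n m p x' y') := by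
    rintro x y ⟨k, j, l, hk, hj, hl, hjl, rfl, rfl⟩
    constructor
    · rintro q x' hs
      rcases x' with z | t
      · exact hs.elim
      obtain ⟨hq, hs0, hs1, ht⟩ := hs
      simp at hq hs0 hs1 ht
      rcases Nat.eq_zero_or_pos j with hj0 | hj1
      · subst hj0
        rcases eq_or_lt_of_le (show l ≤ m by omega) with hlm | hlm
        · -- j = 0, l = m : αm₁ then β₁ then γ
          have hl1 : 1 ≤ l := by omega
          refine ⟨Sum.inl ![n - (k+1) - 0, m - 0 - (l-1), p - (l-1), k+1, l-1, 0],
            ⟨Sum.inl ![n - k - 1, m - l, p - l + 1, k, l - 1, 1],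
              Sum.inl ![n - (k+1) - 0, m - 0 - (l-1), p - (l-1), k+1, l-1, 0],
              Relation.ReflTransGen.head
                (b := Sum.inl ![n - k, m - l + 1, p - l + 1, k, l - 1, 0])
                ⟨vαm₁, by simp, ?_⟩
                (Relation.ReflTransGen.single ⟨vβ₁, by simp, ?_⟩),
              ⟨by simpa using hq, ?_⟩, Relation.ReflTransGen.refl⟩,
            Or.inr ⟨k+1, 0, l-1, by omega, by omega, by omega, by omega, rfl, ?_⟩⟩
          · intro i; fin_cases i <;> simp [vαm₁, cv5] <;> omega
          · intro i; fin_cases i <;> simp [vβ₁, cv5] <;> omega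
          · intro i; fin_cases i <;> simp [vγ, cv5] <;> omega
          · rw [ht]
            exact congrArg Sum.inr (by funext i; fin_cases i <;> simp <;> omega)
        · -- j = 0, l < m : β₁ then γ
          refine ⟨Sum.inl ![n - (k+1) - 0, m - 0 - l, p - l, k+1, l, 0],
            ⟨Sum.inl ![n - k - 1, m - l - 1, p - l, k, l, 1],
              Sum.inl ![n - (k+1) - 0, m - 0 - l, p - l, k+1, l, 0],
              Relation.ReflTransGen.single ⟨vβ₁, by simp, ?_⟩,
              ⟨by simpa using hq, ?_⟩, Relation.ReflTransGen.refl⟩,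
            Or.inr ⟨k+1, 0, l, by omega, by omega, by omega, by omega, rfl, ?_⟩⟩
          · intro i; fin_cases i <;> simp [vβ₁, cv5] <;> omega
          · intro i; fin_cases i <;> simp [vγ, cv5] <;> omega
          · rw [ht]
            exact congrArg Sum.inr (by funext i; fin_cases i <;> simp <;> omega)
      · -- j ≥ 1 : direct γ
        refine ⟨Sum.inl ![n - (k+1) - (j-1), m - (j-1) - l, p - l, k+1, l, j-1],
          ⟨Sum.inl ![n - k - j, m - j - l, p - l, k, l, j],
            Sum.inl ![n - (k+1) - (j-1), m - (j-1) - l, p - l, k+1, l, j-1],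
            Relation.ReflTransGen.refl,
            ⟨by simpa using hq, ?_⟩, Relation.ReflTransGen.refl⟩,
          Or.inr ⟨k+1, j-1, l, by omega, by omega, by omega, by omega, rfl, ?_⟩⟩
        · intro i; fin_cases i <;> simp [vγ, cv5] <;> omega
        · rw [ht]
          exact congrArg Sum.inr (by funext i; fin_cases i <;> simp <;> omega)
    · rintro x' hf
      rcases x' with z | t
      · exact hf.elim
      · exact hf.elim
  have hbis : ciIsFSBisim (ciR n m p) :=
    ⟨hsym, fun x y h => h.elim (hmain1 x y) (hmain2 x y)⟩
  refine ⟨hbis, ciR n m p, hbis,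
    Or.inl ⟨0, 0, 0, Nat.zero_le _, by omega, Nat.zero_le _, by omega, by norm_num, by norm_num⟩⟩
end
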